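/- arXiv:2107.03776 — 2 statements merged into one kernel-verified Lean document; each statement's English description precedes it below -/
import Mathlib

section
/- Let a ≥ 1, 0 < γ < 1, and let Θ_a denote the Hilbert projective metric on the cone C_a. Then for every f ∈ C_{γa} (i.e. f > 0 and var(f) ≤ γ·a·ess inf(f)) with ess inf(f) > 0, one has Θ_a(f, 1) ≤ log((1 + γ(a+1))/(1-γ)). Consequently the diameter of C_{γa} inside C_a with respect to Θ_a is at most 2·log((1 + γ(a+1))/(1-γ)) < ∞. -/
open MeasureTheory

noncomputable def var (f : ℝ → ℝ) (s : Set ℝ) : ℝ := (eVariationOn f s).toReal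
noncomputable def einf (f : ℝ → ℝ) (s : Set ℝ) : ℝ := essInf f (volume.restrict s)
noncomputable def supNorm (f : ℝ → ℝ) (s : Set ℝ) : ℝ :=
  essSup (fun x => |f x|) (volume.restrict s)

/-- The cone `C_a = { f ∈ BV : f > 0 (a.e.), var f ≤ a · essinf f }`. -/
def memC (a : ℝ) (I : Set ℝ) (f : ℝ → ℝ) : Prop :=
  BoundedVariationOn f I ∧ (∀ᵐ x ∂(volume.restrict I), 0 < f x) ∧ var f I ≤ a * einf f I

/-- The partial order induced by the cone: `f ⪯_a g` iff `g - f ∈ C_a ∪ {0}`. -/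
def leC (a : ℝ) (I : Set ℝ) (f g : ℝ → ℝ) : Prop :=
  memC a I (fun x => g x - f x) ∨ (fun x => g x - f x) = 0

/-- `τ(f,h) = sup { λ > 0 : λ·f ⪯_a h }`. -/
noncomputable def tauC (a : ℝ) (I : Set ℝ) (f h : ℝ → ℝ) : ℝ :=
  sSup {l : ℝ | 0 < l ∧ leC a I (fun x => l * f x) h}

/-- `ρ(f,h) = inf { μ > 0 : h ⪯_a μ·f }`. -/
noncomputable def rhoC (a : ℝ) (I : Set ℝ) (f h : ℝ → ℝ) : ℝ :=
  sInf {u : ℝ | 0 < u ∧ leC a I h (fun x => u * f x)}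

/-- The Hilbert projective (pseudo-)metric `Θ_a(f,h) = log (ρ(f,h)/τ(f,h))`. -/
noncomputable def ThetaC (a : ℝ) (I : Set ℝ) (f h : ℝ → ℝ) : ℝ :=
  Real.log (rhoC a I f h / tauC a I f h)

/-!
For `f ∈ C_{βa}` and `h ∈ C_{γa}` one has `h ≤ essinf h + var h ≤ (1 + γa)·essinf h` a.e., so
explicit multiples `λ·f ⪯ h ⪯ μ·f` can be written down: the differences are in `C_a` because their
variation is at most the sum of the variations and their essential infimum is bounded below by the
same estimates. The ratio is `μ/λ = K(β)·K(γ)` with `K(γ) = (1 + γ(a+1))/(1 - γ)`. Comparing `f`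
with `1 ∈ C_0` (`β = 0`) gives `Θ_a(1, f) ≤ log K(γ)`, and `β = γ` gives the diameter bound.
-/

open Filter Set

section Variation

variable {α : Type*} [LinearOrder α]

theorem eVariationOn_add_le {E : Type*} [SeminormedAddCommGroup E] (f g : α → E) (s : Set α) :
    eVariationOn (f + g) s ≤ eVariationOn f s + eVariationOn g s := by
  refine iSup_le fun ⟨n, u, hu, us⟩ => ?_
  calc ∑ i ∈ Finset.range n, edist ((f + g) (u (i + 1))) ((f + g) (u i))
      ≤ ∑ i ∈ Finset.range n,
          (edist (f (u (i + 1))) (f (u i)) + edist (g (u (i + 1))) (g (u i))) :=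
        Finset.sum_le_sum fun i _ => edist_add_add_le _ _ _ _
    _ ≤ eVariationOn f s + eVariationOn g s := by
        rw [Finset.sum_add_distrib]
        exact add_le_add (eVariationOn.sum_le hu us) (eVariationOn.sum_le hu us)

theorem eVariationOn_const_mul (c : ℝ) (f : α → ℝ) (s : Set α) :
    eVariationOn (fun x => c * f x) s = ‖c‖ₑ * eVariationOn f s := by
  simp only [eVariationOn, ENNReal.mul_iSup, Finset.mul_sum, edist_eq_enorm_sub, ← mul_sub,
    enorm_mul]

theorem eVariationOn_const (c : ℝ) (s : Set α) : eVariationOn (fun _ : α => c) s = 0 :=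
  (eVariationOn.eq_zero_iff _).2 fun _ _ _ _ => edist_self c

theorem BoundedVariationOn.add {E : Type*} [SeminormedAddCommGroup E] {f g : α → E}
    {s : Set α} (hf : BoundedVariationOn f s) (hg : BoundedVariationOn g s) :
    BoundedVariationOn (f + g) s :=
  ne_top_of_le_ne_top (ENNReal.add_ne_top.2 ⟨hf, hg⟩) (eVariationOn_add_le f g s)

theorem BoundedVariationOn.const_mul {f : α → ℝ} {s : Set α} (c : ℝ)
    (hf : BoundedVariationOn f s) : BoundedVariationOn (fun x => c * f x) s := by
  rw [BoundedVariationOn, eVariationOn_const_mul]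
  exact ENNReal.mul_ne_top enorm_ne_top hf

end Variation

section Var

theorem var_const (c : ℝ) (s : Set ℝ) : var (fun _ => c) s = 0 := by
  rw [var, eVariationOn_const, ENNReal.toReal_zero]

theorem var_const_mul (c : ℝ) (f : ℝ → ℝ) (s : Set ℝ) :
    var (fun x => c * f x) s = |c| * var f s := by
  rw [var, var, eVariationOn_const_mul, ENNReal.toReal_mul, toReal_enorm, Real.norm_eq_abs]

variable {s : Set ℝ} {f g : ℝ → ℝ}

theorem BoundedVariationOn.var_add_le (hf : BoundedVariationOn f s)
    (hg : BoundedVariationOn g s) : var (f + g) s ≤ var f s + var g s := by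
  rw [var, var, var, ← ENNReal.toReal_add hf hg]
  exact ENNReal.toReal_mono (ENNReal.add_ne_top.2 ⟨hf, hg⟩) (eVariationOn_add_le f g s)

end Var

section EssInf

variable {s : Set ℝ} {f : ℝ → ℝ}

theorem einf_const (hs0 : volume s ≠ 0) (c : ℝ) : einf (fun _ => c) s = c :=
  essInf_const c (Measure.restrict_eq_zero.not.2 hs0)

theorem BoundedVariationOn.ae_le_add_var (hf : BoundedVariationOn f s) (hs : MeasurableSet s)
    {y : ℝ} (hy : y ∈ s) : ∀ᵐ x ∂volume.restrict s, f x ≤ f y + var f s := by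
  filter_upwards [ae_restrict_mem hs] with x hx
  have hxy : f x - f y ≤ var f s := hf.sub_le hx hy
  linarith

theorem BoundedVariationOn.ae_sub_var_le (hf : BoundedVariationOn f s) (hs : MeasurableSet s)
    {y : ℝ} (hy : y ∈ s) : ∀ᵐ x ∂volume.restrict s, f y - var f s ≤ f x := by
  filter_upwards [ae_restrict_mem hs] with x hx
  have hyx : f y - f x ≤ var f s := hf.sub_le hy hx
  linarith

theorem BoundedVariationOn.ae_einf_le (hf : BoundedVariationOn f s) (hs : MeasurableSet s)
    (hs0 : volume s ≠ 0) : ∀ᵐ x ∂volume.restrict s, einf f s ≤ f x :=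
  have ⟨_, hy⟩ := nonempty_of_measure_ne_zero hs0
  ae_essInf_le ⟨_, eventually_map.2 (hf.ae_sub_var_le hs hy)⟩

theorem BoundedVariationOn.le_einf (hf : BoundedVariationOn f s) (hs : MeasurableSet s)
    (hs0 : volume s ≠ 0) {c : ℝ} (hc : ∀ᵐ x ∂volume.restrict s, c ≤ f x) : c ≤ einf f s :=
  have ⟨_, hy⟩ := nonempty_of_measure_ne_zero hs0
  have : (ae (volume.restrict s)).NeBot := ae_restrict_neBot.2 hs0
  le_essInf_of_ae_le c hc
    (IsBoundedUnder.isCoboundedUnder_ge ⟨_, eventually_map.2 (hf.ae_le_add_var hs hy)⟩)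

theorem BoundedVariationOn.ae_le_einf_add_var (hf : BoundedVariationOn f s)
    (hs : MeasurableSet s) (hs0 : volume s ≠ 0) :
    ∀ᵐ x ∂volume.restrict s, f x ≤ einf f s + var f s := by
  filter_upwards [ae_restrict_mem hs] with x hx
  linarith [hf.le_einf hs hs0 (hf.ae_sub_var_le hs hx)]

end EssInf

section Cone

variable {s : Set ℝ} {a : ℝ} {f h : ℝ → ℝ}

def tauSet (a : ℝ) (I : Set ℝ) (f h : ℝ → ℝ) : Set ℝ :=
  {l : ℝ | 0 < l ∧ leC a I (fun x => l * f x) h}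

def rhoSet (a : ℝ) (I : Set ℝ) (f h : ℝ → ℝ) : Set ℝ :=
  {u : ℝ | 0 < u ∧ leC a I h (fun x => u * f x)}

theorem memC_const (hs0 : volume s ≠ 0) {b c : ℝ} (hb : 0 ≤ b) (hc : 0 < c) :
    memC b s (fun _ => c) := by
  refine ⟨?_, ae_of_all _ fun _ => hc, ?_⟩
  · rw [BoundedVariationOn, eVariationOn_const]
    exact ENNReal.zero_ne_top
  · rw [var_const, einf_const hs0]
    positivity

theorem memC_of_ae_le (hs : MeasurableSet s) (hs0 : volume s ≠ 0) (ha : 0 ≤ a) {F : ℝ → ℝ}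
    {m : ℝ} (hm : 0 < m) (hF : BoundedVariationOn F s) (hmF : ∀ᵐ x ∂volume.restrict s, m ≤ F x)
    (hvar : var F s ≤ a * m) : memC a s F :=
  ⟨hF, hmF.mono fun _ hx => hm.trans_le hx,
    hvar.trans (mul_le_mul_of_nonneg_left (hF.le_einf hs hs0 hmF) ha)⟩

theorem memC_const_mul_sub (hs : MeasurableSet s) (hs0 : volume s ≠ 0) (ha : 0 ≤ a)
    {g₁ g₂ : ℝ → ℝ} {c₁ c₂ : ℝ} (hc₁ : 0 ≤ c₁) (hc₂ : 0 ≤ c₂)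
    (hg₁ : BoundedVariationOn g₁ s) (hg₂ : BoundedVariationOn g₂ s)
    (hpos : 0 < c₁ * einf g₁ s - c₂ * (einf g₂ s + var g₂ s))
    (hvar : c₁ * var g₁ s + c₂ * var g₂ s ≤
      a * (c₁ * einf g₁ s - c₂ * (einf g₂ s + var g₂ s))) :
    memC a s (fun x => c₁ * g₁ x - c₂ * g₂ x) := by
  have hsplit : (fun x => c₁ * g₁ x - c₂ * g₂ x) =
      (fun x => c₁ * g₁ x) + fun x => -c₂ * g₂ x := by
    funext x
    simp only [Pi.add_apply]
    ring
  have hBV₁ := hg₁.const_mul c₁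
  have hBV₂ := hg₂.const_mul (-c₂)
  refine memC_of_ae_le hs hs0 ha hpos (hsplit ▸ hBV₁.add hBV₂) ?_ ?_
  · filter_upwards [hg₁.ae_einf_le hs hs0, hg₂.ae_le_einf_add_var hs hs0] with x h₁ h₂
    nlinarith [mul_le_mul_of_nonneg_left h₁ hc₁, mul_le_mul_of_nonneg_left h₂ hc₂]
  · calc var (fun x => c₁ * g₁ x - c₂ * g₂ x) s
        ≤ var (fun x => c₁ * g₁ x) s + var (fun x => -c₂ * g₂ x) s :=
          hsplit ▸ hBV₁.var_add_le hBV₂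
      _ = c₁ * var g₁ s + c₂ * var g₂ s := by
          rw [var_const_mul, var_const_mul, abs_neg, abs_of_nonneg hc₁, abs_of_nonneg hc₂]
      _ ≤ _ := hvar

theorem leC.ae_le {g₁ g₂ : ℝ → ℝ} (hle : leC a s g₁ g₂) :
    ∀ᵐ x ∂volume.restrict s, g₁ x ≤ g₂ x := by
  rcases hle with hmem | hzero
  · filter_upwards [hmem.2.1] with x hx
    linarith
  · exact ae_of_all _ fun x => sub_nonneg.1 (congrFun hzero x).ge

theorem bddAbove_tauSet (hs : MeasurableSet s) (hs0 : volume s ≠ 0)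
    (hf : BoundedVariationOn f s) (hh : BoundedVariationOn h s) (hef : 0 < einf f s) :
    BddAbove (tauSet a s f h) := by
  refine ⟨(einf h s + var h s) / einf f s, fun l ⟨hl, hle⟩ => ?_⟩
  have : (ae (volume.restrict s)).NeBot := ae_restrict_neBot.2 hs0
  obtain ⟨x, hlx, hfx, hhx⟩ := (hle.ae_le.and
    ((hf.ae_einf_le hs hs0).and (hh.ae_le_einf_add_var hs hs0))).exists
  rw [le_div_iff₀ hef]
  calc l * einf f s ≤ l * f x := mul_le_mul_of_nonneg_left hfx hl.le
    _ ≤ h x := hlx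
    _ ≤ einf h s + var h s := hhx

theorem thetaC_le_log_of_mem {l u K : ℝ} (hbdd : BddAbove (tauSet a s f h))
    (hl : l ∈ tauSet a s f h) (hu : u ∈ rhoSet a s f h) (hK : u / l ≤ K) (hK1 : 1 ≤ K) :
    ThetaC a s f h ≤ Real.log K := by
  have hτ : l ≤ tauC a s f h := le_csSup hbdd hl
  have hρ : rhoC a s f h ≤ u := csInf_le ⟨0, fun v hv => hv.1.le⟩ hu
  have hρ0 : 0 ≤ rhoC a s f h := le_csInf ⟨u, hu⟩ fun v hv => hv.1.le
  have hratio : rhoC a s f h / tauC a s f h ≤ K :=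
    (div_le_div₀ (hρ0.trans hρ) hρ hl.1 hτ).trans hK
  rcases (div_nonneg hρ0 (hl.1.le.trans hτ)).eq_or_lt with hzero | hpos
  · rw [ThetaC, ← hzero, Real.log_zero]
    exact Real.log_nonneg hK1
  · exact Real.log_le_log hpos hratio

variable {β γ : ℝ}

theorem mem_tauSet_of_memC (hs : MeasurableSet s) (hs0 : volume s ≠ 0) (ha : 0 ≤ a)
    (hβ : 0 ≤ β) (hγ0 : 0 < γ) (hγ1 : γ < 1) (hf : memC (β * a) s f) (hh : memC (γ * a) s h)
    (hef : 0 < einf f s) (heh : 0 < einf h s) :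
    (1 - γ) * einf h s / ((1 + β * (a + 1)) * einf f s) ∈ tauSet a s f h := by
  set l := (1 - γ) * einf h s / ((1 + β * (a + 1)) * einf f s)
  have hden : 0 < (1 + β * (a + 1)) * einf f s := by positivity
  have hl : 0 < l := div_pos (mul_pos (by linarith) heh) hden
  have hl_eq : l * ((1 + β * (a + 1)) * einf f s) = (1 - γ) * einf h s :=
    div_mul_cancel₀ _ hden.ne'
  have hVf : l * var f s ≤ l * (β * a * einf f s) := mul_le_mul_of_nonneg_left hf.2.2 hl.le
  have hVh : var h s ≤ γ * a * einf h s := hh.2.2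
  refine ⟨hl, Or.inl ?_⟩
  have hmem := memC_const_mul_sub hs hs0 ha zero_le_one hl.le hh.1 hf.1 ?_ ?_
  · simpa only [one_mul] using hmem
  · nlinarith [mul_nonneg (mul_nonneg hl.le hβ) hef.le]
  · nlinarith [mul_le_mul_of_nonneg_left hVf ha]

theorem mem_rhoSet_of_memC (hs : MeasurableSet s) (hs0 : volume s ≠ 0) (ha : 0 ≤ a)
    (hβ0 : 0 ≤ β) (hβ1 : β < 1) (hγ : 0 < γ) (hf : memC (β * a) s f) (hh : memC (γ * a) s h)
    (hef : 0 < einf f s) (heh : 0 < einf h s) :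
    (1 + γ * (a + 1)) * einf h s / ((1 - β) * einf f s) ∈ rhoSet a s f h := by
  set u := (1 + γ * (a + 1)) * einf h s / ((1 - β) * einf f s)
  have hden : 0 < (1 - β) * einf f s := mul_pos (by linarith) hef
  have hu : 0 < u := div_pos (by positivity) hden
  have hu_eq : u * ((1 - β) * einf f s) = (1 + γ * (a + 1)) * einf h s :=
    div_mul_cancel₀ _ hden.ne'
  have hVf : u * var f s ≤ u * (β * a * einf f s) := mul_le_mul_of_nonneg_left hf.2.2 hu.le
  have hVh : var h s ≤ γ * a * einf h s := hh.2.2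
  refine ⟨hu, Or.inl ?_⟩
  have hmem := memC_const_mul_sub hs hs0 ha hu.le zero_le_one hf.1 hh.1 ?_ ?_
  · simpa only [one_mul] using hmem
  · nlinarith [mul_nonneg (mul_nonneg hu.le hβ0) hef.le]
  · nlinarith [mul_le_mul_of_nonneg_left hVh ha]

end Cone

noncomputable def thetaBound (a γ : ℝ) : ℝ := (1 + γ * (a + 1)) / (1 - γ)

theorem thetaBound_zero (a : ℝ) : thetaBound a 0 = 1 := by
  simp [thetaBound]

theorem one_le_thetaBound {a γ : ℝ} (ha : 0 ≤ a) (hγ0 : 0 ≤ γ) (hγ1 : γ < 1) :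
    1 ≤ thetaBound a γ := by
  rw [thetaBound, one_le_div₀ (by linarith)]
  nlinarith

theorem thetaC_le_log_thetaBound_mul {s : Set ℝ} {a β γ : ℝ} {f h : ℝ → ℝ}
    (hs : MeasurableSet s) (hs0 : volume s ≠ 0) (ha : 0 ≤ a)
    (hβ0 : 0 ≤ β) (hβ1 : β < 1) (hγ0 : 0 < γ) (hγ1 : γ < 1)
    (hf : memC (β * a) s f) (hh : memC (γ * a) s h) (hef : 0 < einf f s) (heh : 0 < einf h s) :
    ThetaC a s f h ≤ Real.log (thetaBound a β * thetaBound a γ) := by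
  refine thetaC_le_log_of_mem (bddAbove_tauSet hs hs0 hf.1 hh.1 hef)
    (mem_tauSet_of_memC hs hs0 ha hβ0 hγ0 hγ1 hf hh hef heh)
    (mem_rhoSet_of_memC hs hs0 ha hβ0 hβ1 hγ0 hf hh hef heh) (le_of_eq ?_)
    (one_le_mul_of_one_le_of_one_le (one_le_thetaBound ha hβ0 hβ1)
      (one_le_thetaBound ha hγ0.le hγ1))
  have : 1 - β ≠ 0 := by linarith
  have : 1 - γ ≠ 0 := by linarith
  have : 1 + β * (a + 1) ≠ 0 := by positivity
  rw [thetaBound, thetaBound]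
  field_simp

/-- For `a ≥ 1`, `0 < γ < 1`, every `f ∈ C_{γa}` with `essinf f > 0`
satisfies `Θ_a(1,f) ≤ log((1+γ(a+1))/(1-γ))` (with finiteness: the defining sets of
`τ` and `ρ` are nonempty and the `τ`-set is bounded), and consequently the
`Θ_a`-diameter of `C_{γa}` inside `C_a` is at most `2·log((1+γ(a+1))/(1-γ))`. -/
theorem stmt7 (A B : ℝ) (hAB : A < B) (a γ : ℝ) (ha : 1 ≤ a) (hγ0 : 0 < γ) (hγ1 : γ < 1) :
    (∀ f : ℝ → ℝ, memC (γ * a) (Set.Icc A B) f → 0 < einf f (Set.Icc A B) →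
      {l : ℝ | 0 < l ∧ leC a (Set.Icc A B) (fun x => l * (fun _ : ℝ => (1:ℝ)) x) f}.Nonempty ∧
      BddAbove {l : ℝ | 0 < l ∧ leC a (Set.Icc A B) (fun x => l * (fun _ : ℝ => (1:ℝ)) x) f} ∧
      {u : ℝ | 0 < u ∧ leC a (Set.Icc A B) f (fun x => u * (fun _ : ℝ => (1:ℝ)) x)}.Nonempty ∧
      ThetaC a (Set.Icc A B) (fun _ => (1:ℝ)) f
        ≤ Real.log ((1 + γ * (a + 1)) / (1 - γ))) ∧
    (∀ f h : ℝ → ℝ, memC (γ * a) (Set.Icc A B) f → memC (γ * a) (Set.Icc A B) h →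
      0 < einf f (Set.Icc A B) → 0 < einf h (Set.Icc A B) →
      ThetaC a (Set.Icc A B) f h ≤ 2 * Real.log ((1 + γ * (a + 1)) / (1 - γ))) := by
  have ha0 : 0 ≤ a := zero_le_one.trans ha
  have hs : MeasurableSet (Icc A B) := measurableSet_Icc
  have hs0 : volume (Icc A B) ≠ 0 := by simpa using hAB
  have hone : memC (0 * a) (Icc A B) (fun _ => 1) := memC_const hs0 (zero_mul a).ge one_pos
  have hone_einf : 0 < einf (fun _ => (1 : ℝ)) (Icc A B) := by rw [einf_const hs0]; exact one_pos
  refine ⟨fun f hf hef => ⟨?_, ?_, ?_, ?_⟩, fun f h hf hh hef heh => ?_⟩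
  · exact ⟨_, mem_tauSet_of_memC hs hs0 ha0 le_rfl hγ0 hγ1 hone hf hone_einf hef⟩
  · exact bddAbove_tauSet hs hs0 hone.1 hf.1 hone_einf
  · exact ⟨_, mem_rhoSet_of_memC hs hs0 ha0 le_rfl zero_lt_one hγ0 hone hf hone_einf hef⟩
  · have hθ := thetaC_le_log_thetaBound_mul hs hs0 ha0 le_rfl zero_lt_one hγ0 hγ1 hone hf
      hone_einf hef
    rwa [thetaBound_zero, one_mul] at hθ
  · calc ThetaC a (Icc A B) f h ≤ Real.log (thetaBound a γ * thetaBound a γ) :=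
          thetaC_le_log_thetaBound_mul hs hs0 ha0 hγ0.le hγ1 hγ0 hγ1 hf hh hef heh
      _ = 2 * Real.log ((1 + γ * (a + 1)) / (1 - γ)) := by
          have hK : thetaBound a γ ≠ 0 :=
            (zero_lt_one.trans_le (one_le_thetaBound ha0 hγ0.le hγ1)).ne'
          rw [Real.log_mul hK hK, thetaBound]
          ring
end

section
/- With the setup of the previous statement (σ ergodic invertible, log c, log d ∈ L^1(m), ∫ log c dm < log γ < 0), the solution a(ω) = Σ_{j=0}^∞ γ^{-j-1} d(σ^{-j-1}ω) ∏_{k=1}^{j} c(σ^{-k}ω) of the twisted cohomological equation γ·a∘σ = c·a + d is a tempered function: for m-a.e. ω, lim_{|n|→∞} (1/n)·log a(σ^n ω) = 0. -/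
/-!
By Birkhoff's theorem for `σ⁻¹`, the logarithm of the `j`-th term of the series is
`j (∫ log c - log γ) + o(j)`, so the series converges almost everywhere. The solution satisfies
`γ A ∘ σ = c A + d` and `A ≥ γ⁻¹ d ∘ σ⁻¹`, which squeezes `log A ∘ σ - log A` between integrable
functions. Birkhoff's theorem, for `σ` and for `σ⁻¹`, then gives `log A (σ^{±n} ω) / n → ℓ`, where
`ℓ` is the integral of the coboundary, and `ℓ = 0` because under a measure-preserving map the
values of a fixed function cannot grow linearly along almost every orbit.
-/

open MeasureTheory Filter Topology Real

section MaximalErgodic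

variable {Ω : Type*} {σ : Ω → Ω} {g : Ω → ℝ}

/-- Garsia's recursive form of the running maximum `max 0 (S₁ g) … (Sₙ g)` of the Birkhoff sums. -/
noncomputable def birkhoffMax (σ : Ω → Ω) (g : Ω → ℝ) : ℕ → Ω → ℝ
  | 0 => 0
  | n + 1 => fun ω => max 0 (g ω + birkhoffMax σ g n (σ ω))

lemma birkhoffMax_succ (n : ℕ) (ω : Ω) :
    birkhoffMax σ g (n + 1) ω = max 0 (g ω + birkhoffMax σ g n (σ ω)) := rfl

lemma birkhoffMax_nonneg : ∀ n ω, 0 ≤ birkhoffMax σ g n ω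
  | 0, _ => le_rfl
  | _ + 1, _ => le_max_left _ _

lemma birkhoffMax_le_succ : ∀ n ω, birkhoffMax σ g n ω ≤ birkhoffMax σ g (n + 1) ω
  | 0, ω => birkhoffMax_nonneg 1 ω
  | n + 1, ω => max_le_max le_rfl (add_le_add_right (birkhoffMax_le_succ n (σ ω)) _)

lemma monotone_birkhoffMax (ω : Ω) : Monotone fun n => birkhoffMax σ g n ω :=
  monotone_nat_of_le_succ fun n => birkhoffMax_le_succ n ω

lemma birkhoffSum_le_birkhoffMax : ∀ n ω, birkhoffSum σ g n ω ≤ birkhoffMax σ g n ω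
  | 0, ω => by simp [birkhoffSum_zero, birkhoffMax]
  | n + 1, ω => by
    rw [birkhoffSum_succ']
    exact (add_le_add_right (birkhoffSum_le_birkhoffMax n (σ ω)) _).trans (le_max_right _ _)

lemma birkhoffMax_succ_sub_le_indicator (n : ℕ) (ω : Ω) :
    birkhoffMax σ g (n + 1) ω - birkhoffMax σ g n (σ ω) ≤
      {x | 0 < birkhoffMax σ g (n + 1) x}.indicator g ω := by
  simp only [Set.indicator_apply, Set.mem_ofPred_eq]
  split_ifs with h
  · have h' : 0 < g ω + birkhoffMax σ g n (σ ω) := by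
      simpa [birkhoffMax_succ, lt_max_iff] using h
    rw [birkhoffMax_succ, max_eq_right h'.le, add_sub_cancel_right]
  · rw [le_antisymm (not_lt.1 h) (birkhoffMax_nonneg _ _)]
    linarith [birkhoffMax_nonneg (σ := σ) (g := g) n (σ ω)]

variable [MeasurableSpace Ω] {m : Measure Ω}

lemma measurable_birkhoffSum (hσ : Measurable σ) (hg : Measurable g) (n : ℕ) :
    Measurable (birkhoffSum σ g n) :=
  Finset.measurable_sum _ fun k _ => hg.comp (hσ.iterate k)

lemma measurable_birkhoffMax (hσ : Measurable σ) (hg : Measurable g) :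
    ∀ n, Measurable (birkhoffMax σ g n)
  | 0 => measurable_const
  | n + 1 => measurable_const.max (hg.add ((measurable_birkhoffMax hσ hg n).comp hσ))

lemma integrable_birkhoffMax (hσ : MeasurePreserving σ m m) (hg : Integrable g m) :
    ∀ n, Integrable (birkhoffMax σ g n) m
  | 0 => integrable_zero _ _ _
  | n + 1 => by
    have hM := integrable_birkhoffMax hσ hg n
    exact (integrable_zero _ _ _).sup
      (hg.add ((hσ.integrable_comp hM.aestronglyMeasurable).2 hM))

lemma setIntegral_pos_birkhoffMax_nonneg (hσ : MeasurePreserving σ m m) (hgm : Measurable g)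
    (hg : Integrable g m) (n : ℕ) :
    0 ≤ ∫ ω in {ω | 0 < birkhoffMax σ g n ω}, g ω ∂m := by
  cases n with
  | zero => simp [birkhoffMax]
  | succ n =>
    have hM := integrable_birkhoffMax hσ hg
    have hMσ : Integrable (fun ω => birkhoffMax σ g n (σ ω)) m :=
      (hσ.integrable_comp (hM n).aestronglyMeasurable).2 (hM n)
    have hshift : ∫ ω, birkhoffMax σ g n (σ ω) ∂m = ∫ ω, birkhoffMax σ g n ω ∂m := by
      rw [← integral_map hσ.measurable.aemeasurable
        (by rw [hσ.map_eq]; exact (hM n).aestronglyMeasurable), hσ.map_eq]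
    have hmono : ∫ ω, birkhoffMax σ g n ω ∂m ≤ ∫ ω, birkhoffMax σ g (n + 1) ω ∂m :=
      integral_mono (hM n) (hM (n + 1)) (birkhoffMax_le_succ n)
    have hset : MeasurableSet {ω | 0 < birkhoffMax σ g (n + 1) ω} :=
      measurableSet_lt measurable_const (measurable_birkhoffMax hσ.measurable hgm _)
    have hle : ∫ ω, (birkhoffMax σ g (n + 1) ω - birkhoffMax σ g n (σ ω)) ∂m ≤
        ∫ ω, {x | 0 < birkhoffMax σ g (n + 1) x}.indicator g ω ∂m :=
      integral_mono ((hM (n + 1)).sub hMσ) (hg.indicator hset)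
        (birkhoffMax_succ_sub_le_indicator n)
    rw [integral_sub (hM (n + 1)) hMσ, hshift, integral_indicator hset] at hle
    linarith

/-- Garsia's maximal ergodic inequality. -/
theorem setIntegral_iUnion_pos_birkhoffMax_nonneg (hσ : MeasurePreserving σ m m)
    (hgm : Measurable g) (hg : Integrable g m) :
    0 ≤ ∫ ω in ⋃ n, {ω | 0 < birkhoffMax σ g n ω}, g ω ∂m :=
  ge_of_tendsto'
    (tendsto_setIntegral_of_monotone
      (fun n => measurableSet_lt measurable_const (measurable_birkhoffMax hσ.measurable hgm n))
      (fun _ _ hij _ hω => hω.trans_le (monotone_birkhoffMax _ hij)) hg.integrableOn)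
    (setIntegral_pos_birkhoffMax_nonneg hσ hgm hg)

end MaximalErgodic

section Birkhoff

variable {Ω : Type*} {σ : Ω → Ω} {g : Ω → ℝ}

lemma bddAbove_birkhoffSum_apply_iff (ω : Ω) :
    BddAbove (Set.range fun n => birkhoffSum σ g n (σ ω)) ↔
      BddAbove (Set.range fun n => birkhoffSum σ g n ω) := by
  constructor
  · rintro ⟨C, hC⟩
    refine ⟨max 0 (g ω + C), ?_⟩
    rintro _ ⟨n, rfl⟩
    cases n with
    | zero => simp [birkhoffSum_zero]
    | succ n =>
      show birkhoffSum σ g (n + 1) ω ≤ _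
      rw [birkhoffSum_succ']
      exact le_max_of_le_right (add_le_add_right (hC (Set.mem_range_self n)) _)
  · rintro ⟨C, hC⟩
    refine ⟨C - g ω, ?_⟩
    rintro _ ⟨n, rfl⟩
    have := hC (Set.mem_range_self (n + 1))
    rw [birkhoffSum_succ'] at this
    linarith

lemma tendsto_apply_iterate_div_of_tendsto_birkhoffAverage {ω : Ω} {L : ℝ}
    (h : Tendsto (fun n => birkhoffAverage ℝ σ g n ω) atTop (𝓝 L)) :
    Tendsto (fun n : ℕ => g (σ^[n] ω) / n) atTop (𝓝 0) := by
  have hS : Tendsto (fun n : ℕ => birkhoffSum σ g n ω / n) atTop (𝓝 L) :=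
    h.congr fun n => by rw [birkhoffAverage, smul_eq_mul, inv_mul_eq_div]
  have hratio : Tendsto (fun n : ℕ => ((n + 1 : ℕ) : ℝ) / n) atTop (𝓝 1) := by
    have h1 := (tendsto_const_div_atTop_nhds_zero_nat (1 : ℝ)).const_add 1
    rw [add_zero] at h1
    refine h1.congr' ?_
    filter_upwards [eventually_ne_atTop 0] with n hn
    field_simp
    push_cast
    ring
  have hS' : Tendsto (fun n : ℕ => birkhoffSum σ g (n + 1) ω / n) atTop (𝓝 L) := by
    have h1 := (hS.comp (tendsto_add_atTop_nat 1)).mul hratio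
    rw [mul_one] at h1
    refine h1.congr fun n => ?_
    simp only [Function.comp_apply]
    rw [div_mul_div_comm, mul_comm, mul_div_mul_left _ _ (by positivity)]
  simpa using (hS'.sub hS).congr fun n => by
    rw [birkhoffSum_succ, ← sub_div, add_sub_cancel_left]

variable [MeasurableSpace Ω] {m : Measure Ω}

/-- The set where the Birkhoff sums are bounded above is invariant; by ergodicity it is null or
conull, and if it were null the maximal ergodic inequality would force `0 ≤ ∫ g`. -/
theorem Ergodic.ae_bddAbove_birkhoffSum (herg : Ergodic σ m) (hgm : Measurable g)
    (hg : Integrable g m) (hneg : ∫ ω, g ω ∂m < 0) :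
    ∀ᵐ ω ∂m, BddAbove (Set.range fun n => birkhoffSum σ g n ω) := by
  set B := {ω | BddAbove (Set.range fun n => birkhoffSum σ g n ω)}
  have hB : MeasurableSet B :=
    measurableSet_bddAbove_range (measurable_birkhoffSum herg.measurable hgm)
  have hinv : σ ⁻¹' B = B := Set.ext bddAbove_birkhoffSum_apply_iff
  refine (herg.measure_self_or_compl_eq_zero hB hinv).elim (fun hnull => ?_) mem_ae_iff.2
  refine absurd (setIntegral_iUnion_pos_birkhoffMax_nonneg herg.toMeasurePreserving hgm hg)
    (not_le.2 ?_)
  rwa [Measure.restrict_eq_self_of_ae_mem]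
  filter_upwards [measure_eq_zero_iff_ae_notMem.1 hnull] with ω hω
  obtain ⟨_, ⟨n, rfl⟩, hn⟩ := not_bddAbove_iff.1 hω 0
  exact Set.mem_iUnion.2 ⟨n, hn.trans_le (birkhoffSum_le_birkhoffMax n ω)⟩

variable [IsProbabilityMeasure m]

theorem Ergodic.ae_eventually_birkhoffAverage_lt (herg : Ergodic σ m) (hgm : Measurable g)
    (hg : Integrable g m) {a : ℝ} (ha : ∫ ω, g ω ∂m < a) :
    ∀ᵐ ω ∂m, ∀ᶠ n in atTop, birkhoffAverage ℝ σ g n ω < a := by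
  obtain ⟨b, hgb, hb⟩ := exists_between ha
  have hbdd := herg.ae_bddAbove_birkhoffSum (g := fun ω => g ω - b) (hgm.sub measurable_const)
    (hg.sub (integrable_const b)) (by
      rwa [integral_sub hg (integrable_const b), integral_const, probReal_univ, one_smul, sub_neg])
  filter_upwards [hbdd] with ω ⟨C, hC⟩
  filter_upwards [(tendsto_const_div_atTop_nhds_zero_nat C).eventually_lt_const (sub_pos.2 hb),
    eventually_gt_atTop 0] with n hn hn0
  have hS : birkhoffSum σ (fun ω => g ω - b) n ω = birkhoffSum σ g n ω - n * b := by
    simp [birkhoffSum, Finset.sum_sub_distrib]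
  have hle := hC (Set.mem_range_self n)
  rw [hS] at hle
  have hn' : (0 : ℝ) < n := by exact_mod_cast hn0
  rw [birkhoffAverage, smul_eq_mul, inv_mul_lt_iff₀ hn']
  rw [div_lt_iff₀ hn'] at hn
  linarith

theorem Ergodic.ae_tendsto_birkhoffAverage (herg : Ergodic σ m) (hgm : Measurable g)
    (hg : Integrable g m) :
    ∀ᵐ ω ∂m, Tendsto (fun n => birkhoffAverage ℝ σ g n ω) atTop (𝓝 (∫ ω, g ω ∂m)) := by
  have hup : ∀ᵐ ω ∂m, ∀ q : ℚ, ∫ ω, g ω ∂m < q →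
      ∀ᶠ n in atTop, birkhoffAverage ℝ σ g n ω < q := by
    refine ae_all_iff.2 fun q => ?_
    by_cases hq : ∫ ω, g ω ∂m < q
    · filter_upwards [herg.ae_eventually_birkhoffAverage_lt hgm hg hq] with ω hω using fun _ => hω
    · exact .of_forall fun _ h => absurd h hq
  have hlow : ∀ᵐ ω ∂m, ∀ q : ℚ, (q : ℝ) < ∫ ω, g ω ∂m →
      ∀ᶠ n in atTop, (q : ℝ) < birkhoffAverage ℝ σ g n ω := by
    refine ae_all_iff.2 fun q => ?_
    by_cases hq : (q : ℝ) < ∫ ω, g ω ∂m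
    · have hq' : ∫ ω, (-g) ω ∂m < -q := by simpa [integral_neg] using hq
      filter_upwards [herg.ae_eventually_birkhoffAverage_lt hgm.neg hg.neg hq'] with ω hω
      refine fun _ => hω.mono fun n hn => ?_
      rw [birkhoffAverage_neg, Pi.neg_apply, Pi.neg_apply] at hn
      linarith
    · exact .of_forall fun _ h => absurd h hq
  filter_upwards [hup, hlow] with ω hωup hωlow
  refine tendsto_order.2 ⟨fun a ha => ?_, fun a ha => ?_⟩
  · obtain ⟨q, haq, hq⟩ := exists_rat_btwn ha
    exact (hωlow q hq).mono fun n hn => haq.trans hn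
  · obtain ⟨q, hq, hqa⟩ := exists_rat_btwn ha
    exact (hωup q hq).mono fun n hn => hn.trans hqa

end Birkhoff

section Coboundary

variable {Ω : Type*} {σ : Ω → Ω}

lemma birkhoffSum_comp_sub (u : Ω → ℝ) (n : ℕ) (ω : Ω) :
    birkhoffSum σ (fun x => u (σ x) - u x) n ω = u (σ^[n] ω) - u ω := by
  simp only [birkhoffSum, ← Function.iterate_succ_apply' σ]
  exact Finset.sum_range_sub (fun k => u (σ^[k] ω)) n

variable [MeasurableSpace Ω] {m : Measure Ω}

/-- The sets `σ^[n] ⁻¹' {|u| ≤ R}` all have the measure of `{|u| ≤ R}`, which is positive for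
large `R`, so almost every orbit cannot leave `{|u| ≤ R}` for good, as `L ≠ 0` would force. -/
lemma MeasureTheory.MeasurePreserving.eq_zero_of_ae_tendsto_div [IsFiniteMeasure m] [NeZero m]
    (hσ : MeasurePreserving σ m m) {u : Ω → ℝ} (hu : Measurable u) {L : ℝ}
    (h : ∀ᵐ ω ∂m, Tendsto (fun n : ℕ => u (σ^[n] ω) / n) atTop (𝓝 L)) : L = 0 := by
  by_contra hL
  obtain ⟨R, hR⟩ : ∃ R : ℕ, m {ω | |u ω| ≤ R} ≠ 0 := by
    by_contra! h0
    have huniv : (⋃ R : ℕ, {ω | |u ω| ≤ R}) = Set.univ :=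
      Set.iUnion_eq_univ_iff.2 fun ω => exists_nat_ge |u ω|
    exact NeZero.ne m (Measure.measure_univ_eq_zero.1 (huniv ▸ measure_iUnion_null h0))
  have hK : MeasurableSet {ω | |u ω| ≤ R} := measurableSet_le hu.abs measurable_const
  have hescape : ∀ᵐ ω ∂m, ∀ᶠ n in atTop,
      ω ∈ σ^[n] ⁻¹' {ω | |u ω| ≤ R} ↔ ω ∈ (∅ : Set Ω) := by
    filter_upwards [h] with ω hω
    have habs : Tendsto (fun n : ℕ => |u (σ^[n] ω)|) atTop atTop := by
      refine (tendsto_natCast_atTop_atTop.atTop_mul_pos (abs_pos.2 hL) hω.abs).congr' ?_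
      filter_upwards [eventually_ne_atTop 0] with n hn
      rw [abs_div, Nat.abs_cast, mul_div_cancel₀ _ (Nat.cast_ne_zero.2 hn)]
    filter_upwards [habs.eventually_gt_atTop (R : ℝ)] with n hn
    simpa using hn
  have hlim := tendsto_measure_of_ae_tendsto_indicator_of_isFiniteMeasure atTop
    MeasurableSet.empty (fun n => hσ.measurable.iterate n hK) hescape
  simp only [(hσ.iterate _).measure_preimage hK.nullMeasurableSet, measure_empty] at hlim
  exact hR (tendsto_nhds_unique tendsto_const_nhds hlim)

theorem Ergodic.ae_tendsto_div_of_integrable_comp_sub [IsProbabilityMeasure m]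
    (herg : Ergodic σ m) {u : Ω → ℝ} (hu : Measurable u)
    (hi : Integrable (fun ω => u (σ ω) - u ω) m) :
    ∀ᵐ ω ∂m, Tendsto (fun n : ℕ => u (σ^[n] ω) / n) atTop (𝓝 0) := by
  have hlim : ∀ᵐ ω ∂m,
      Tendsto (fun n : ℕ => u (σ^[n] ω) / n) atTop (𝓝 (∫ ω, u (σ ω) - u ω ∂m)) := by
    filter_upwards [herg.ae_tendsto_birkhoffAverage (g := fun ω => u (σ ω) - u ω)
        ((hu.comp herg.measurable).sub hu) hi]
      with ω hω
    have := hω.add (tendsto_const_div_atTop_nhds_zero_nat (u ω))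
    rw [add_zero] at this
    refine this.congr fun n => ?_
    rw [birkhoffAverage, birkhoffSum_comp_sub, smul_eq_mul]
    ring
  rwa [herg.toMeasurePreserving.eq_zero_of_ae_tendsto_div hu hlim] at hlim

end Coboundary

lemma Ergodic.of_leftInverse {Ω : Type*} [MeasurableSpace Ω] {m : Measure Ω} {σ σinv : Ω → Ω}
    (herg : Ergodic σ m) (hinv : Measurable σinv)
    (hl : Function.LeftInverse σinv σ) (hr : Function.RightInverse σinv σ) :
    Ergodic σinv m :=
  Ergodic.symm (e := ⟨⟨σ, σinv, hl, hr⟩, herg.measurable, hinv⟩) herg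

lemma summable_of_tendsto_log_div_neg {P : ℕ → ℝ} (hP : ∀ j, 0 < P j) {L : ℝ} (hL : L < 0)
    (hlim : Tendsto (fun j : ℕ => log (P j) / j) atTop (𝓝 L)) : Summable P := by
  refine Summable.of_norm_bounded_eventually_nat
    (summable_geometric_of_lt_one (exp_pos (L / 2)).le (exp_lt_one_iff.2 (by linarith))) ?_
  filter_upwards [hlim.eventually_lt_const (by linarith : L < L / 2), eventually_gt_atTop 0]
    with j hj hj0
  have hj' : (0 : ℝ) < j := by exact_mod_cast hj0
  rw [div_lt_iff₀ hj'] at hj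
  rw [Real.norm_of_nonneg (hP j).le, ← exp_nat_mul, ← exp_log (hP j)]
  exact exp_le_exp.2 (by linarith)

lemma abs_log_add_le {x y z : ℝ} (hx : 0 < x) (hy : 0 < y) (hyz : y ≤ z) :
    |log (x + y)| ≤ log 2 + |log x| + |log z| := by
  have hz : 0 < z := hy.trans_le hyz
  have hx' : x ≤ exp (|log x| + |log z|) := by
    calc x = exp (log x) := (exp_log hx).symm
      _ ≤ _ := exp_le_exp.2 (by linarith [le_abs_self (log x), abs_nonneg (log z)])
  have hz' : z ≤ exp (|log x| + |log z|) := by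
    calc z = exp (log z) := (exp_log hz).symm
      _ ≤ _ := exp_le_exp.2 (by linarith [le_abs_self (log z), abs_nonneg (log x)])
  rw [abs_le]
  constructor
  · have := log_le_log hx (by linarith : x ≤ x + y)
    linarith [neg_abs_le (log x), log_nonneg (one_le_two : (1 : ℝ) ≤ 2), abs_nonneg (log z)]
  · calc log (x + y) ≤ log (2 * exp (|log x| + |log z|)) := log_le_log (by linarith) (by linarith)
      _ = log 2 + |log x| + |log z| := by
        rw [log_mul two_ne_zero (exp_pos _).ne', log_exp, add_assoc]

section Solution

variable {Ω : Type*} {σ σinv : Ω → Ω} {c d : Ω → ℝ} {γ : ℝ} {A : Ω → ℝ}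

noncomputable def solutionTerm (σinv : Ω → Ω) (c d : Ω → ℝ) (γ : ℝ) (j : ℕ) (ω : Ω) : ℝ :=
  γ ^ (-(j : ℤ) - 1) * d (σinv^[j + 1] ω) * ∏ k ∈ Finset.range j, c (σinv^[k + 1] ω)

lemma solutionTerm_pos (hγ : 0 < γ) (hc : ∀ ω, 0 < c ω) (hd : ∀ ω, 0 < d ω) (j : ℕ) (ω : Ω) :
    0 < solutionTerm σinv c d γ j ω :=
  mul_pos (mul_pos (zpow_pos hγ _) (hd _)) (Finset.prod_pos fun _ _ => hc _)

lemma solutionTerm_zero (ω : Ω) : solutionTerm σinv c d γ 0 ω = γ⁻¹ * d (σinv ω) := by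
  simp [solutionTerm]

lemma solutionTerm_succ_apply (hl : Function.LeftInverse σinv σ) (hγ : γ ≠ 0) (j : ℕ) (ω : Ω) :
    solutionTerm σinv c d γ (j + 1) (σ ω) = γ⁻¹ * c ω * solutionTerm σinv c d γ j ω := by
  have hit : ∀ k, σinv^[k + 1] (σ ω) = σinv^[k] ω := fun k => by
    rw [Function.iterate_succ_apply, hl ω]
  simp only [solutionTerm, hit, Finset.prod_range_succ', Function.iterate_zero_apply]
  rw [show -((j + 1 : ℕ) : ℤ) - 1 = -1 + (-(j : ℤ) - 1) by push_cast; ring, zpow_add₀ hγ,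
    zpow_neg_one]
  ring

lemma log_solutionTerm (hγ : 0 < γ) (hc : ∀ ω, 0 < c ω) (hd : ∀ ω, 0 < d ω) (j : ℕ) (ω : Ω) :
    log (solutionTerm σinv c d γ j ω) = -((j : ℝ) + 1) * log γ + log (d (σinv^[j] (σinv ω))) +
      birkhoffSum σinv (fun x => log (c x)) j (σinv ω) := by
  rw [solutionTerm, log_mul (mul_pos (zpow_pos hγ _) (hd _)).ne'
      (Finset.prod_pos fun _ _ => hc _).ne', log_mul (zpow_pos hγ _).ne' (hd _).ne', log_zpow,
    log_prod fun _ _ => (hc _).ne']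
  simp only [birkhoffSum, Function.iterate_succ_apply]
  push_cast
  ring

lemma tendsto_log_solutionTerm_div (hγ : 0 < γ) (hc : ∀ ω, 0 < c ω) (hd : ∀ ω, 0 < d ω)
    {ω : Ω} {Ic Id : ℝ}
    (hBc : Tendsto (fun n => birkhoffAverage ℝ σinv (fun x => log (c x)) n (σinv ω)) atTop
      (𝓝 Ic))
    (hBd : Tendsto (fun n => birkhoffAverage ℝ σinv (fun x => log (d x)) n (σinv ω)) atTop
      (𝓝 Id)) :
    Tendsto (fun j : ℕ => log (solutionTerm σinv c d γ j ω) / j) atTop (𝓝 (Ic - log γ)) := by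
  have hγterm := (tendsto_const_div_atTop_nhds_zero_nat (-log γ)).const_add (-log γ)
  have h := (hγterm.add (tendsto_apply_iterate_div_of_tendsto_birkhoffAverage hBd)).add hBc
  rw [add_zero, add_zero, neg_add_eq_sub] at h
  refine h.congr' ?_
  filter_upwards [eventually_ne_atTop 0] with j hj
  rw [log_solutionTerm hγ hc hd, birkhoffAverage, smul_eq_mul]
  field_simp
  ring

lemma cohomological_eq_of_summable (hl : Function.LeftInverse σinv σ) (hγ : γ ≠ 0)
    (hA : ∀ ω, A ω = ∑' j, solutionTerm σinv c d γ j ω) {ω : Ω}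
    (hs : Summable fun j => solutionTerm σinv c d γ j ω) :
    γ * A (σ ω) = c ω * A ω + d ω := by
  have hshift : (fun j => solutionTerm σinv c d γ (j + 1) (σ ω)) =
      fun j => γ⁻¹ * c ω * solutionTerm σinv c d γ j ω :=
    funext fun j => solutionTerm_succ_apply hl hγ j ω
  rw [hA, hA, tsum_eq_zero_add' (hshift ▸ hs.mul_left _), hshift, tsum_mul_left,
    solutionTerm_zero, hl ω]
  field_simp
  ring

lemma inv_mul_le_solution (hγ : 0 < γ) (hc : ∀ ω, 0 < c ω) (hd : ∀ ω, 0 < d ω)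
    (hA : ∀ ω, A ω = ∑' j, solutionTerm σinv c d γ j ω) {ω : Ω}
    (hs : Summable fun j => solutionTerm σinv c d γ j ω) :
    γ⁻¹ * d (σinv ω) ≤ A ω :=
  hA ω ▸ solutionTerm_zero (c := c) ω ▸
    hs.le_tsum 0 fun j _ => (solutionTerm_pos hγ hc hd j ω).le

/-- Since `γ A ∘ σ = A (c + d / A)` and `A ≥ γ⁻¹ d ∘ σinv`, the ratio `A ∘ σ / A` is squeezed
between `γ⁻¹ c` and `γ⁻¹ (c + γ d / d ∘ σinv)`. -/
lemma abs_log_solution_comp_sub_le (hl : Function.LeftInverse σinv σ) (hγ : 0 < γ)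
    (hc : ∀ ω, 0 < c ω) (hd : ∀ ω, 0 < d ω)
    (hA : ∀ ω, A ω = ∑' j, solutionTerm σinv c d γ j ω) {ω : Ω}
    (hs : Summable fun j => solutionTerm σinv c d γ j ω) :
    |log (A (σ ω)) - log (A ω)| ≤
      |log γ| + log 2 + |log (c ω)| + |log (γ * d ω / d (σinv ω))| := by
  have hlow := inv_mul_le_solution hγ hc hd hA hs
  have hApos : 0 < A ω := (mul_pos (inv_pos.2 hγ) (hd _)).trans_le hlow
  have hratio : d ω / A ω ≤ γ * d ω / d (σinv ω) := by
    rw [div_le_div_iff₀ hApos (hd _)]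
    have := mul_le_mul_of_nonneg_left hlow (mul_pos hγ (hd ω)).le
    field_simp at this
    linarith
  have hAσ : A (σ ω) = γ⁻¹ * (A ω * (c ω + d ω / A ω)) := by
    rw [mul_add, mul_div_cancel₀ _ hApos.ne', mul_comm (A ω), ← cohomological_eq_of_summable hl
      hγ.ne' hA hs, inv_mul_cancel_left₀ hγ.ne']
  have hsum : 0 < c ω + d ω / A ω := by have := div_pos (hd ω) hApos; linarith [hc ω]
  rw [hAσ, log_mul (inv_pos.2 hγ).ne' (mul_pos hApos hsum).ne', log_mul hApos.ne' hsum.ne',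
    log_inv, show ∀ a b e : ℝ, -a + (b + e) - b = -a + e by intros; ring]
  calc |-log γ + log (c ω + d ω / A ω)| ≤ |log γ| + |log (c ω + d ω / A ω)| := by
        simpa using abs_add_le (-log γ) (log (c ω + d ω / A ω))
    _ ≤ _ := by
        linarith [abs_log_add_le (hc ω) (div_pos (hd ω) hApos) hratio]

variable [MeasurableSpace Ω] {m : Measure Ω}

lemma measurable_solutionTerm (hσinv : Measurable σinv) (hcm : Measurable c)
    (hdm : Measurable d) (j : ℕ) : Measurable (solutionTerm σinv c d γ j) :=
  (measurable_const.mul (hdm.comp (hσinv.iterate _))).mul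
    (Finset.measurable_prod _ fun _ _ => hcm.comp (hσinv.iterate _))

lemma ae_summable_solutionTerm [IsProbabilityMeasure m] (herg : Ergodic σinv m)
    (hcm : Measurable c) (hdm : Measurable d) (hc : ∀ ω, 0 < c ω) (hd : ∀ ω, 0 < d ω)
    (hlogc : Integrable (fun ω => log (c ω)) m) (hlogd : Integrable (fun ω => log (d ω)) m)
    (hγ : 0 < γ) (hintc : ∫ ω, log (c ω) ∂m < log γ) :
    ∀ᵐ ω ∂m, Summable fun j => solutionTerm σinv c d γ j ω := by
  filter_upwards [herg.quasiMeasurePreserving.ae (herg.ae_tendsto_birkhoffAverage hcm.log hlogc),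
    herg.quasiMeasurePreserving.ae (herg.ae_tendsto_birkhoffAverage hdm.log hlogd)]
    with ω hBc hBd
  exact summable_of_tendsto_log_div_neg (solutionTerm_pos hγ hc hd · ω) (sub_neg.2 hintc)
    (tendsto_log_solutionTerm_div hγ hc hd hBc hBd)

lemma integrable_log_solution_comp_sub [IsFiniteMeasure m] (hσ : Measurable σ)
    (hσinv : MeasurePreserving σinv m m) (hl : Function.LeftInverse σinv σ)
    (hc : ∀ ω, 0 < c ω) (hd : ∀ ω, 0 < d ω)
    (hlogc : Integrable (fun ω => log (c ω)) m) (hlogd : Integrable (fun ω => log (d ω)) m)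
    (hγ : 0 < γ) (hA : ∀ ω, A ω = ∑' j, solutionTerm σinv c d γ j ω) (hAm : Measurable A)
    (hs : ∀ᵐ ω ∂m, Summable fun j => solutionTerm σinv c d γ j ω) :
    Integrable (fun ω => log (A (σ ω)) - log (A ω)) m := by
  have hlogratio : Integrable (fun ω => log (γ * d ω / d (σinv ω))) m := by
    refine (((integrable_const (log γ)).add hlogd).sub
      ((hσinv.integrable_comp hlogd.aestronglyMeasurable).2 hlogd)).congr (.of_forall fun ω => ?_)
    simp only [Pi.add_apply, Pi.sub_apply, Function.comp_apply]
    rw [log_div (mul_pos hγ (hd ω)).ne' (hd _).ne', log_mul hγ.ne' (hd ω).ne']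
  refine ((integrable_const (|log γ| + log 2)).add hlogc.abs |>.add hlogratio.abs).mono'
    ((hAm.comp hσ).log.sub hAm.log).aestronglyMeasurable ?_
  filter_upwards [hs] with ω hω
  exact abs_log_solution_comp_sub_le hl hγ hc hd hA hω

end Solution

theorem stmt11_general {Ω : Type*} [MeasurableSpace Ω] (m : Measure Ω) [IsProbabilityMeasure m]
    (σ σinv : Ω → Ω)
    (herg : Ergodic σ m)
    (hlinv : Function.LeftInverse σinv σ) (hrinv : Function.RightInverse σinv σ)
    (hinvmeas : Measurable σinv)
    (c d : Ω → ℝ) (hcm : Measurable c) (hdm : Measurable d)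
    (hcpos : ∀ ω, 0 < c ω) (hdpos : ∀ ω, 0 < d ω)
    (hlogc : Integrable (fun ω => Real.log (c ω)) m)
    (hlogd : Integrable (fun ω => Real.log (d ω)) m)
    (γ : ℝ) (hγ0 : 0 < γ)
    (hintc : ∫ ω, Real.log (c ω) ∂m < Real.log γ)
    (A : Ω → ℝ)
    (hA : ∀ ω, A ω = ∑' j : ℕ,
      γ ^ (-(j : ℤ) - 1) * d (σinv^[j + 1] ω) * ∏ k ∈ Finset.range j, c (σinv^[k + 1] ω)) :
    ∀ᵐ ω ∂m,
      Tendsto (fun n : ℕ => Real.log (A (σ^[n] ω)) / n) atTop (nhds 0) ∧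
      Tendsto (fun n : ℕ => Real.log (A (σinv^[n] ω)) / n) atTop (nhds 0) := by
  have herginv : Ergodic σinv m := herg.of_leftInverse hinvmeas hlinv hrinv
  have hAm : Measurable A := by
    rw [funext hA]
    exact Measurable.tsum (measurable_solutionTerm hinvmeas hcm hdm)
  have hint : Integrable (fun ω => log (A (σ ω)) - log (A ω)) m :=
    integrable_log_solution_comp_sub herg.measurable herginv.toMeasurePreserving hlinv hcpos
      hdpos hlogc hlogd hγ0 hA hAm
      (ae_summable_solutionTerm herginv hcm hdm hcpos hdpos hlogc hlogd hγ0 hintc)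
  have hint' : Integrable (fun ω => log (A (σinv ω)) - log (A ω)) m := by
    refine ((herginv.integrable_comp hint.aestronglyMeasurable).2 hint).neg.congr
      (.of_forall fun ω => ?_)
    simp [hrinv ω]
  filter_upwards [herg.ae_tendsto_div_of_integrable_comp_sub hAm.log hint,
    herginv.ae_tendsto_div_of_integrable_comp_sub hAm.log hint'] with ω h h' using ⟨h, h'⟩

/-- With `σ` ergodic invertible measure preserving, `log c, log d ∈ L¹(m)`
and `∫ log c dm < log γ < 0`, the solution
`a(ω) = Σ_{j≥0} γ^{-j-1} d(σ^{-j-1}ω) ∏_{k=1}^j c(σ^{-k}ω)` of the twisted cohomological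
equation `γ·a∘σ = c·a + d` is tempered: for m-a.e. `ω`,
`(1/n)·log a(σ^n ω) → 0` as `|n| → ∞` (in both the forward and backward directions). -/
theorem stmt11 {Ω : Type*} [MeasurableSpace Ω] (m : Measure Ω) [IsProbabilityMeasure m]
    (σ σinv : Ω → Ω)
    (hmp : MeasurePreserving σ m m) (herg : Ergodic σ m)
    (hlinv : Function.LeftInverse σinv σ) (hrinv : Function.RightInverse σinv σ)
    (hinvmeas : Measurable σinv)
    (c d : Ω → ℝ) (hcm : Measurable c) (hdm : Measurable d)
    (hcpos : ∀ ω, 0 < c ω) (hdpos : ∀ ω, 0 < d ω)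
    (hlogc : Integrable (fun ω => Real.log (c ω)) m)
    (hlogd : Integrable (fun ω => Real.log (d ω)) m)
    (γ : ℝ) (hγ0 : 0 < γ) (hγ1 : γ < 1)
    (hintc : ∫ ω, Real.log (c ω) ∂m < Real.log γ) (hγneg : Real.log γ < 0)
    (A : Ω → ℝ)
    (hA : ∀ ω, A ω = ∑' j : ℕ,
      γ ^ (-(j : ℤ) - 1) * d (σinv^[j + 1] ω) * ∏ k ∈ Finset.range j, c (σinv^[k + 1] ω)) :
    ∀ᵐ ω ∂m,
      Tendsto (fun n : ℕ => Real.log (A (σ^[n] ω)) / n) atTop (nhds 0) ∧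
      Tendsto (fun n : ℕ => Real.log (A (σinv^[n] ω)) / n) atTop (nhds 0) :=
  stmt11_general m σ σinv herg hlinv hrinv hinvmeas c d hcm hdm hcpos hdpos hlogc hlogd γ hγ0 hintc
    A hA
end
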